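/- Every element of G_BV is represented by a block; that is, for every g in G_BV there exist a block w_1 w_2 w_3^{−1} whose image in G_BV equals g. -/

import Mathlib

/-- Relator corresponding to the equation `u = v`. -/
def grel {α : Type*} (u v : FreeGroup α) : FreeGroup α := u * v⁻¹

/-- Generators of the braided Thompson group `BV`.  `s i` denotes `σ_{i+1}` and
`t i` denotes `τ_{i+1}` (so that exactly the generators `σ_i, τ_i` with `i ≥ 1` occur). -/
inductive BVGen : Type
  | x : ℕ → BVGen
  | s : ℕ → BVGen
  | t : ℕ → BVGen

namespace BVGen

/-- The free-group letter `x_i`. -/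
def X (i : ℕ) : FreeGroup BVGen := FreeGroup.of (BVGen.x i)

/-- The free-group letter `σ_i` (meaningful for `i ≥ 1`). -/
def S (i : ℕ) : FreeGroup BVGen := FreeGroup.of (BVGen.s (i - 1))

/-- The free-group letter `τ_i` (meaningful for `i ≥ 1`). -/
def T (i : ℕ) : FreeGroup BVGen := FreeGroup.of (BVGen.t (i - 1))

/-- The defining relations of the braided Thompson group `BV`. -/
def bvRels : Set (FreeGroup BVGen) :=
  { g |
    (∃ i j, i < j ∧ g = grel (X j * X i) (X i * X (j + 1))) ∨
    (∃ i j, 1 ≤ i ∧ i + 2 ≤ j ∧ g = grel (S i * S j) (S j * S i)) ∨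
    (∃ i, 1 ≤ i ∧ g = grel (S i * S (i + 1) * S i) (S (i + 1) * S i * S (i + 1))) ∨
    (∃ i j, 1 ≤ i ∧ i + 2 ≤ j ∧ g = grel (S i * T j) (T j * S i)) ∨
    (∃ i, 1 ≤ i ∧ g = grel (S i * T (i + 1) * S i) (T (i + 1) * S i * T (i + 1))) ∨
    (∃ i j, 1 ≤ i ∧ i < j ∧ g = grel (S i * X j) (X j * S i)) ∨
    (∃ i, 1 ≤ i ∧ g = grel (S i * X i) (X (i - 1) * S (i + 1) * S i)) ∨
    (∃ i j, j + 2 ≤ i ∧ g = grel (S i * X j) (X j * S (i + 1))) ∨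
    (∃ i, g = grel (S (i + 1) * X i) (X (i + 1) * S (i + 1) * S (i + 2))) ∨
    (∃ i j, j + 2 ≤ i ∧ g = grel (T i * X j) (X j * T (i + 1))) ∨
    (∃ i, 1 ≤ i ∧ g = grel (T i * X (i - 1)) (S i * T (i + 1))) ∨
    (∃ i, 1 ≤ i ∧ g = grel (T i) (X (i - 1) * T (i + 1) * S i)) }

end BVGen

/-- The braided Thompson group `BV`, given by its infinite presentation. -/
abbrev GBV : Type := PresentedGroup BVGen.bvRels

namespace GBV

/-- The generator `x_i` of `BV`. -/
def xg (i : ℕ) : GBV := PresentedGroup.of (BVGen.x i)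

/-- The generator `σ_i` of `BV` (meaningful for `i ≥ 1`). -/
def sg (i : ℕ) : GBV := PresentedGroup.of (BVGen.s (i - 1))

/-- The generator `τ_i` of `BV` (meaningful for `i ≥ 1`). -/
def tg (i : ℕ) : GBV := PresentedGroup.of (BVGen.t (i - 1))

/-- H_n: the subgroup of `BV` generated by the B_n generators
`σ_1, …, σ_{n-2}, τ_{n-1}`. -/
def Hn (n : ℕ) : Subgroup GBV :=
  Subgroup.closure ({g | ∃ i, 1 ≤ i ∧ i + 2 ≤ n ∧ g = sg i} ∪ {tg (n - 1)})

end GBV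

namespace GBV

/-- `N(u)` for a positive x-word given by its list of indices:
`N(empty) = 0`, `N(u x_j) = max (N u + 1) (j + 2)`. -/
def Nval (l : List ℕ) : ℕ := l.foldl (fun acc j => max (acc + 1) (j + 2)) 0

/-- The B_n generators, as letters: `σ_1, …, σ_{n-2}, τ_{n-1}`. -/
def BnGen (n : ℕ) : Set BVGen :=
  {g | (∃ i, 1 ≤ i ∧ i + 2 ≤ n ∧ g = BVGen.s (i - 1)) ∨ (2 ≤ n ∧ g = BVGen.t (n - 2))}

/-- A block `w₁ w₂ w₃⁻¹`: `w₁` and `w₃` are positive x-words with nondecreasing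
indices (i.e. of the form `x_{i₁}^{r₁} ⋯ x_{i_k}^{r_k}` with `i₁ < ⋯ < i_k`, `r_m ≥ 1`),
recorded as lists of indices, and `w₂` is a word in the B_n generators and their
inverses (letters with a sign) for some `n ≥ max (N w₁) (N w₃) + 1`. -/
structure Block where
  w1 : List ℕ
  w2 : List (BVGen × Bool)
  w3 : List ℕ
  n : ℕ
  h1 : w1.Chain' (· ≤ ·)
  h3 : w3.Chain' (· ≤ ·)
  h2 : ∀ p ∈ w2, p.1 ∈ BnGen n
  hbound : max (Nval w1) (Nval w3) + 1 ≤ n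

/-- Evaluation of a positive x-word in `BV`. -/
def evalX (l : List ℕ) : GBV := (l.map xg).prod

/-- Evaluation of a signed word in the generators in `BV`. -/
def evalW (l : List (BVGen × Bool)) : GBV :=
  (l.map (fun p => if p.2 then PresentedGroup.of p.1 else (PresentedGroup.of p.1)⁻¹)).prod

/-- The element of `BV` represented by a block. -/
def Block.eval (b : Block) : GBV := evalX b.w1 * evalW b.w2 * (evalX b.w3)⁻¹

end GBV

/-!
Every generator of `H_n = ⟨σ_1, …, σ_{n-2}, τ_{n-1}⟩` and its inverse can be pushed past a
letter `x_k`, `k ≤ n - 2`, by a single relation among (C1)–(C4), (D1)–(D3): it becomes an element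
of `H_{n+1}`, while `x_k` becomes at most one letter `x_j` with `j ≤ n - 2`; likewise (D2), (D3)
write `τ_{n-1}^{±1}` as `x_{n-2}` times an element of `H_{n+1}`. These properties are stable under
products, so `H_n ⊆ x_{≤ n-2} H_{n+1}` and `H_n x_k ⊆ x_{≤ n-2} H_{n+1}`. Applied to inverses they
say that an element of `H_n` moves leftwards past `x_k⁻¹` at the cost of one letter `x_j⁻¹` and of
raising the level to `n + 1`.

Hence the products `w₁ h w₃⁻¹` with `h ∈ H_n`, `N(w₁) < n` and `w₁, w₃` positive are stable under
right multiplication by each `H_m`: raise `h` to a level exceeding the letters of `w₃`, pass it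
through `w₃⁻¹`, and absorb it into a raised `w₁ h`. The `H_m` generate `BV`, because
`x_j = τ_{j+1} (τ_{j+2} σ_{j+1})⁻¹` by (D3). Finally (A) sorts `w₁` and `w₃` without changing
`N`, and one more raise makes `n > N(w₃)`.
-/

theorem PresentedGroup.mk_eq_mk_of_grel_mem {α : Type*} {rels : Set (FreeGroup α)}
    {u v : FreeGroup α} (h : grel u v ∈ rels) :
    PresentedGroup.mk rels u = PresentedGroup.mk rels v := by
  have := PresentedGroup.one_of_mem h
  rwa [grel, map_mul, map_inv, mul_inv_eq_one] at this

theorem inv_mul_eq_mul_inv_of_mul_eq_mul {G : Type*} [Group G] {a b x y : G}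
    (h : a * x = y * b) : a⁻¹ * y = x * b⁻¹ := by
  rw [inv_mul_eq_iff_eq_mul, ← mul_assoc, h, mul_inv_cancel_right]

namespace GBV

open BVGen

section Relations

@[simp] theorem mk_X (i : ℕ) : PresentedGroup.mk bvRels (X i) = xg i := rfl
@[simp] theorem mk_S (i : ℕ) : PresentedGroup.mk bvRels (S i) = sg i := rfl
@[simp] theorem mk_T (i : ℕ) : PresentedGroup.mk bvRels (T i) = tg i := rfl

variable {i j : ℕ}

theorem xg_mul_xg_of_lt (h : i < j) : xg j * xg i = xg i * xg (j + 1) := by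
  simpa using PresentedGroup.mk_eq_mk_of_grel_mem (show _ ∈ bvRels from
    Or.inl ⟨i, j, h, rfl⟩)

theorem sg_mul_xg_of_lt (hi : 1 ≤ i) (h : i < j) : sg i * xg j = xg j * sg i := by
  simpa using PresentedGroup.mk_eq_mk_of_grel_mem (show _ ∈ bvRels from
    Or.inr <| Or.inr <| Or.inr <| Or.inr <| Or.inr <| Or.inl ⟨i, j, hi, h, rfl⟩)

theorem sg_succ_mul_xg_succ (i : ℕ) :
    sg (i + 1) * xg (i + 1) = xg i * sg (i + 2) * sg (i + 1) := by
  simpa using PresentedGroup.mk_eq_mk_of_grel_mem (show _ ∈ bvRels from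
    Or.inr <| Or.inr <| Or.inr <| Or.inr <| Or.inr <| Or.inr <| Or.inl ⟨i + 1, by omega, rfl⟩)

theorem sg_mul_xg_of_add_two_le (h : j + 2 ≤ i) : sg i * xg j = xg j * sg (i + 1) := by
  simpa using PresentedGroup.mk_eq_mk_of_grel_mem (show _ ∈ bvRels from
    Or.inr <| Or.inr <| Or.inr <| Or.inr <| Or.inr <| Or.inr <| Or.inr <| Or.inl ⟨i, j, h, rfl⟩)

theorem sg_succ_mul_xg (i : ℕ) : sg (i + 1) * xg i = xg (i + 1) * sg (i + 1) * sg (i + 2) := by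
  simpa using PresentedGroup.mk_eq_mk_of_grel_mem (show _ ∈ bvRels from
    Or.inr <| Or.inr <| Or.inr <| Or.inr <| Or.inr <| Or.inr <| Or.inr <| Or.inr <| Or.inl
      ⟨i, rfl⟩)

theorem tg_mul_xg_of_add_two_le (h : j + 2 ≤ i) : tg i * xg j = xg j * tg (i + 1) := by
  simpa using PresentedGroup.mk_eq_mk_of_grel_mem (show _ ∈ bvRels from
    Or.inr <| Or.inr <| Or.inr <| Or.inr <| Or.inr <| Or.inr <| Or.inr <| Or.inr <| Or.inr <|
      Or.inl ⟨i, j, h, rfl⟩)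

theorem tg_succ_mul_xg (i : ℕ) : tg (i + 1) * xg i = sg (i + 1) * tg (i + 2) := by
  simpa using PresentedGroup.mk_eq_mk_of_grel_mem (show _ ∈ bvRels from
    Or.inr <| Or.inr <| Or.inr <| Or.inr <| Or.inr <| Or.inr <| Or.inr <| Or.inr <| Or.inr <|
      Or.inr <| Or.inl ⟨i + 1, by omega, rfl⟩)

theorem tg_succ_eq (i : ℕ) : tg (i + 1) = xg i * tg (i + 2) * sg (i + 1) := by
  simpa using PresentedGroup.mk_eq_mk_of_grel_mem (show _ ∈ bvRels from
    Or.inr <| Or.inr <| Or.inr <| Or.inr <| Or.inr <| Or.inr <| Or.inr <| Or.inr <| Or.inr <|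
      Or.inr <| Or.inr ⟨i + 1, by omega, rfl⟩)

end Relations

@[simp] theorem evalX_nil : evalX [] = 1 := rfl

@[simp] theorem evalX_cons (j : ℕ) (l : List ℕ) : evalX (j :: l) = xg j * evalX l := by
  simp [evalX]

@[simp] theorem evalX_append (l₁ l₂ : List ℕ) : evalX (l₁ ++ l₂) = evalX l₁ * evalX l₂ := by
  simp [evalX]

theorem sg_mem_Hn {i n : ℕ} (hi : 1 ≤ i) (hn : i + 2 ≤ n) : sg i ∈ Hn n :=
  Subgroup.subset_closure (Or.inl ⟨i, hi, hn, rfl⟩)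

theorem tg_mem_Hn (i : ℕ) : tg i ∈ Hn (i + 1) :=
  Subgroup.subset_closure (Or.inr (by simp))

/-- The set `x_{≤ n-2} H_{n+1}`, the optional letter `x_j` encoded by `o : Option ℕ`. -/
def lowXHn (n : ℕ) : Set GBV :=
  {g | ∃ o : Option ℕ, (∀ j ∈ o, j + 2 ≤ n) ∧ ∃ h ∈ Hn (n + 1), evalX o.toList * h = g}

section LowXHn

variable {n j : ℕ} {g h : GBV}

theorem mem_lowXHn_of_mem (hh : h ∈ Hn (n + 1)) : h ∈ lowXHn n :=
  ⟨none, by simp, h, hh, by simp⟩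

theorem xg_mul_mem_lowXHn (hj : j + 2 ≤ n) (hh : h ∈ Hn (n + 1)) : xg j * h ∈ lowXHn n :=
  ⟨some j, by simpa using hj, h, hh, by simp⟩

theorem mul_mem_lowXHn (hg : g ∈ lowXHn n) (hh : h ∈ Hn (n + 1)) : g * h ∈ lowXHn n := by
  obtain ⟨o, ho, h', hh', rfl⟩ := hg
  exact ⟨o, ho, h' * h, mul_mem hh' hh, by rw [mul_assoc]⟩

end LowXHn

def Raisable (n : ℕ) (h : GBV) : Prop :=
  h ∈ lowXHn n ∧ ∀ k, k + 2 ≤ n → h * xg k ∈ lowXHn n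

section Raisable

variable {n : ℕ} {a b : GBV}

theorem raisable_one : Raisable n 1 :=
  ⟨mem_lowXHn_of_mem (one_mem _), fun k hk => by simpa using xg_mul_mem_lowXHn hk (one_mem _)⟩

theorem Raisable.mul_mem_lowXHn (ha : Raisable n a) {g : GBV} (hg : g ∈ lowXHn n) :
    a * g ∈ lowXHn n := by
  obtain ⟨o, ho, h, hh, rfl⟩ := hg
  cases o with
  | none => simpa using GBV.mul_mem_lowXHn ha.1 hh
  | some k => simpa [mul_assoc] using GBV.mul_mem_lowXHn (ha.2 k (ho k rfl)) hh

theorem Raisable.mul (ha : Raisable n a) (hb : Raisable n b) : Raisable n (a * b) :=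
  ⟨ha.mul_mem_lowXHn hb.1, fun k hk => by rw [mul_assoc]; exact ha.mul_mem_lowXHn (hb.2 k hk)⟩

theorem raisable_sg {i : ℕ} (hi : 1 ≤ i) (hin : i + 2 ≤ n) : Raisable n (sg i) := by
  refine ⟨mem_lowXHn_of_mem (sg_mem_Hn hi (by omega)), fun k hk => ?_⟩
  obtain h | rfl | rfl | h : i < k ∨ k = i ∨ i = k + 1 ∨ k + 2 ≤ i := by omega
  · rw [sg_mul_xg_of_lt hi h]
    exact xg_mul_mem_lowXHn hk (sg_mem_Hn hi (by omega))
  · obtain ⟨k, rfl⟩ : ∃ k', k = k' + 1 := ⟨k - 1, by omega⟩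
    rw [sg_succ_mul_xg_succ, mul_assoc]
    exact xg_mul_mem_lowXHn (by omega) (mul_mem (sg_mem_Hn (by omega) (by omega))
      (sg_mem_Hn (by omega) (by omega)))
  · rw [sg_succ_mul_xg, mul_assoc]
    exact xg_mul_mem_lowXHn (by omega) (mul_mem (sg_mem_Hn (by omega) (by omega))
      (sg_mem_Hn (by omega) (by omega)))
  · rw [sg_mul_xg_of_add_two_le h]
    exact xg_mul_mem_lowXHn hk (sg_mem_Hn (by omega) (by omega))

theorem raisable_sg_inv {i : ℕ} (hi : 1 ≤ i) (hin : i + 2 ≤ n) : Raisable n (sg i)⁻¹ := by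
  refine ⟨mem_lowXHn_of_mem (inv_mem (sg_mem_Hn hi (by omega))), fun k hk => ?_⟩
  obtain h | rfl | rfl | h : i < k ∨ k = i ∨ i = k + 1 ∨ k + 2 ≤ i := by omega
  · rw [inv_mul_eq_mul_inv_of_mul_eq_mul (sg_mul_xg_of_lt hi h)]
    exact xg_mul_mem_lowXHn hk (inv_mem (sg_mem_Hn hi (by omega)))
  · obtain ⟨k, rfl⟩ : ∃ k', k = k' + 1 := ⟨k - 1, by omega⟩
    rw [inv_mul_eq_mul_inv_of_mul_eq_mul (by rw [sg_succ_mul_xg, mul_assoc])]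
    exact xg_mul_mem_lowXHn (by omega)
      (inv_mem (mul_mem (sg_mem_Hn (by omega) (by omega)) (sg_mem_Hn (by omega) (by omega))))
  · rw [inv_mul_eq_mul_inv_of_mul_eq_mul (by rw [sg_succ_mul_xg_succ, mul_assoc])]
    exact xg_mul_mem_lowXHn (by omega)
      (inv_mem (mul_mem (sg_mem_Hn (by omega) (by omega)) (sg_mem_Hn (by omega) (by omega))))
  · rw [inv_mul_eq_mul_inv_of_mul_eq_mul (sg_mul_xg_of_add_two_le h)]
    exact xg_mul_mem_lowXHn hk (inv_mem (sg_mem_Hn (by omega) (by omega)))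

theorem raisable_tg (m : ℕ) : Raisable (m + 2) (tg (m + 1)) := by
  refine ⟨?_, fun k hk => ?_⟩
  · rw [tg_succ_eq m, mul_assoc]
    exact xg_mul_mem_lowXHn le_rfl (mul_mem (tg_mem_Hn _) (sg_mem_Hn (by omega) (by omega)))
  · obtain h | rfl : k < m ∨ k = m := by omega
    · rw [tg_mul_xg_of_add_two_le (by omega)]
      exact xg_mul_mem_lowXHn hk (tg_mem_Hn _)
    · rw [tg_succ_mul_xg]
      exact mem_lowXHn_of_mem (mul_mem (sg_mem_Hn (by omega) (by omega)) (tg_mem_Hn _))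

theorem raisable_tg_inv (m : ℕ) : Raisable (m + 2) (tg (m + 1))⁻¹ := by
  refine ⟨?_, fun k hk => ?_⟩
  · have e : (tg (m + 1))⁻¹ = xg m * (sg (m + 1) * tg (m + 2))⁻¹ := by
      rw [← tg_succ_mul_xg]; group
    rw [e]
    exact xg_mul_mem_lowXHn le_rfl
      (inv_mem (mul_mem (sg_mem_Hn (by omega) (by omega)) (tg_mem_Hn _)))
  · obtain h | rfl : k < m ∨ k = m := by omega
    · rw [inv_mul_eq_mul_inv_of_mul_eq_mul (tg_mul_xg_of_add_two_le (by omega))]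
      exact xg_mul_mem_lowXHn hk (inv_mem (tg_mem_Hn _))
    · have e : (tg (k + 1))⁻¹ * xg k = (tg (k + 2) * sg (k + 1))⁻¹ := by
        rw [tg_succ_eq k]; group
      rw [e]
      exact mem_lowXHn_of_mem (inv_mem (mul_mem (tg_mem_Hn _) (sg_mem_Hn (by omega) (by omega))))

theorem raisable_of_mem_Hn (hn : 2 ≤ n) {h : GBV} (hh : h ∈ Hn n) : Raisable n h := by
  obtain ⟨m, rfl⟩ : ∃ m, n = m + 2 := ⟨n - 2, by omega⟩
  induction hh using Subgroup.closure_induction'' with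
  | mem g hg =>
    rcases hg with ⟨i, hi, hin, rfl⟩ | rfl
    · exact raisable_sg hi hin
    · exact raisable_tg m
  | inv_mem g hg =>
    rcases hg with ⟨i, hi, hin, rfl⟩ | rfl
    · exact raisable_sg_inv hi hin
    · exact raisable_tg_inv m
  | one => exact raisable_one
  | mul a b _ _ ha hb => exact ha.mul hb

end Raisable

section Passing

variable {n : ℕ} {h : GBV}

theorem exists_eq_mul_inv_of_mem_Hn (hn : 2 ≤ n) (hh : h ∈ Hn n) :
    ∃ h' ∈ Hn (n + 1), ∃ Y : List ℕ, h = h' * (evalX Y)⁻¹ := by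
  obtain ⟨o, -, h', hh', e⟩ := (raisable_of_mem_Hn hn (inv_mem hh)).1
  exact ⟨h'⁻¹, inv_mem hh', o.toList, by rw [← mul_inv_rev, e, inv_inv]⟩

theorem exists_eq_mul_inv_of_mem_Hn_of_le {m : ℕ} (hn : 2 ≤ n) (hnm : n ≤ m) (hh : h ∈ Hn n) :
    ∃ h' ∈ Hn m, ∃ Y : List ℕ, h = h' * (evalX Y)⁻¹ := by
  induction m, hnm using Nat.le_induction with
  | base => exact ⟨h, hh, [], by simp⟩
  | succ m hnm ih =>
    obtain ⟨h₁, hh₁, Y, rfl⟩ := ih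
    obtain ⟨h₂, hh₂, Y', rfl⟩ := exists_eq_mul_inv_of_mem_Hn (by omega) hh₁
    exact ⟨h₂, hh₂, Y ++ Y', by simp [mul_assoc]⟩

theorem inv_xg_mul_eq_of_mem_Hn {k : ℕ} (hk : k + 2 ≤ n) (hh : h ∈ Hn n) :
    ∃ h' ∈ Hn (n + 1), ∃ Y : List ℕ, (xg k)⁻¹ * h = h' * (evalX Y)⁻¹ := by
  obtain ⟨o, -, h', hh', e⟩ := (raisable_of_mem_Hn (by omega) (inv_mem hh)).2 k hk
  exact ⟨h'⁻¹, inv_mem hh', o.toList, by rw [← mul_inv_rev, e, mul_inv_rev, inv_inv]⟩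

theorem inv_evalX_mul_eq_of_mem_Hn {V : List ℕ} (hV : ∀ j ∈ V, j + 2 ≤ n)
    (hh : h ∈ Hn n) : ∃ h' ∈ Hn (n + V.length), ∃ V' : List ℕ,
      (evalX V)⁻¹ * h = h' * (evalX V')⁻¹ := by
  induction V generalizing n h with
  | nil => exact ⟨h, hh, [], by simp⟩
  | cons j V ih =>
    obtain ⟨h₁, hh₁, Y, e₁⟩ := inv_xg_mul_eq_of_mem_Hn (hV j (by simp)) hh
    obtain ⟨h₂, hh₂, V', e₂⟩ :=
      ih (fun i hi => by have := hV i (by simp [hi]); omega) hh₁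
    have hlen : n + (j :: V).length = n + 1 + V.length := by simp; omega
    refine ⟨h₂, hlen ▸ hh₂, Y ++ V', ?_⟩
    calc (evalX (j :: V))⁻¹ * h = (evalX V)⁻¹ * ((xg j)⁻¹ * h) := by simp [mul_assoc]
      _ = h₂ * (evalX (Y ++ V'))⁻¹ := by rw [e₁, ← mul_assoc, e₂]; simp [mul_assoc]

end Passing

theorem Nval_append_singleton (U : List ℕ) (j : ℕ) :
    Nval (U ++ [j]) = max (Nval U + 1) (j + 2) := by
  simp [Nval, List.foldl_append]

def halfBlocks (n : ℕ) : Set GBV :=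
  {g | ∃ U, Nval U + 1 ≤ n ∧ ∃ h ∈ Hn n, evalX U * h = g}

section HalfBlocks

variable {n : ℕ} {g h : GBV}

theorem halfBlocks_subset_succ (hn : 2 ≤ n) : halfBlocks n ⊆ halfBlocks (n + 1) := by
  rintro _ ⟨U, hU, h, hh, rfl⟩
  obtain ⟨o, ho, h', hh', rfl⟩ := (raisable_of_mem_Hn hn hh).1
  refine ⟨U ++ o.toList, ?_, h', hh', by rw [evalX_append, mul_assoc]⟩
  cases o with
  | none => simp; omega
  | some j => have := ho j rfl; simp [Nval_append_singleton]; omega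

theorem halfBlocks_mono {m : ℕ} (hn : 2 ≤ n) (hnm : n ≤ m) : halfBlocks n ⊆ halfBlocks m := by
  induction m, hnm using Nat.le_induction with
  | base => rfl
  | succ m hnm ih => exact ih.trans (halfBlocks_subset_succ (by omega))

theorem mul_mem_halfBlocks (hg : g ∈ halfBlocks n) (hh : h ∈ Hn n) : g * h ∈ halfBlocks n := by
  obtain ⟨U, hU, h', hh', rfl⟩ := hg
  exact ⟨U, hU, h' * h, mul_mem hh' hh, (mul_assoc _ _ _).symm⟩

end HalfBlocks

def blockForms : Set GBV :=
  {g | ∃ n, 2 ≤ n ∧ ∃ p ∈ halfBlocks n, ∃ V : List ℕ, p * (evalX V)⁻¹ = g}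

theorem one_mem_blockForms : (1 : GBV) ∈ blockForms :=
  ⟨2, le_rfl, 1, ⟨[], by simp [Nval], 1, one_mem _, by simp⟩, [], by simp⟩

theorem mul_mem_blockForms {g h : GBV} {m : ℕ} (hg : g ∈ blockForms) (hm : 2 ≤ m)
    (hh : h ∈ Hn m) : g * h ∈ blockForms := by
  obtain ⟨n, hn, p, hp, V, rfl⟩ := hg
  set M := m + n + V.sum + 2
  have hV : ∀ j ∈ V, j + 2 ≤ M := fun j hj => by have := List.le_sum_of_mem hj; omega
  obtain ⟨h₁, hh₁, Y, rfl⟩ := exists_eq_mul_inv_of_mem_Hn_of_le hm (show m ≤ M by omega) hh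
  obtain ⟨h₂, hh₂, V', e⟩ := inv_evalX_mul_eq_of_mem_Hn hV hh₁
  refine ⟨M + V.length, by omega, p * h₂,
    mul_mem_halfBlocks (halfBlocks_mono hn (by omega) hp) hh₂, Y ++ V', ?_⟩
  calc p * h₂ * (evalX (Y ++ V'))⁻¹ = p * (h₂ * (evalX V')⁻¹) * (evalX Y)⁻¹ := by
        simp [mul_assoc]
    _ = p * (evalX V)⁻¹ * (h₁ * (evalX Y)⁻¹) := by rw [← e]; group

theorem iSup_Hn_eq_top : ⨆ n, Hn (n + 2) = ⊤ := by
  rw [eq_top_iff, ← PresentedGroup.closure_range_of, Subgroup.closure_le]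
  rintro _ ⟨a, rfl⟩
  cases a with
  | x j =>
    have e : xg j = tg (j + 1) * (tg (j + 2) * sg (j + 1))⁻¹ := by
      rw [tg_succ_eq j]; group
    change xg j ∈ _
    rw [e]
    refine mul_mem (Subgroup.mem_iSup_of_mem j (tg_mem_Hn _)) (inv_mem ?_)
    exact Subgroup.mem_iSup_of_mem (j + 1) (mul_mem (tg_mem_Hn _) (sg_mem_Hn le_add_self le_rfl))
  | s a => exact Subgroup.mem_iSup_of_mem (a + 1) (sg_mem_Hn (i := a + 1) (by omega) (by omega))
  | t c => exact Subgroup.mem_iSup_of_mem c (tg_mem_Hn (c + 1))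

theorem mem_blockForms (g : GBV) : g ∈ blockForms := by
  have hg : g ∈ Subgroup.closure (⋃ n, (Hn (n + 2) : Set GBV)) := by
    rw [← Subgroup.iSup_eq_closure, iSup_Hn_eq_top]; trivial
  induction hg using Subgroup.closure_induction_right with
  | one => exact one_mem_blockForms
  | mul_right x _ y hy ih =>
    obtain ⟨n, hy⟩ := Set.mem_iUnion.mp hy
    exact mul_mem_blockForms ih (by omega) hy
  | mul_inv_cancel x _ y hy ih =>
    obtain ⟨n, hy⟩ := Set.mem_iUnion.mp hy
    exact mul_mem_blockForms ih (by omega) (inv_mem hy)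

/-- The bound on the letters of `l'` is what keeps `l' ++ [a + 1]` sorted in the induction. -/
theorem exists_pairwise_evalX_eq_mul_xg {l : List ℕ} (hl : l.Pairwise (· ≤ ·)) (j : ℕ) :
    ∃ l' : List ℕ, l'.Pairwise (· ≤ ·) ∧ evalX l' = evalX l * xg j ∧
      Nval l' = Nval (l ++ [j]) ∧ ∀ b, j ≤ b → (∀ z ∈ l, z ≤ b) → ∀ y ∈ l', y ≤ b + 1 := by
  induction l using List.reverseRecOn with
  | nil => exact ⟨[j], by simp, by simp, rfl, by simp; omega⟩
  | append_singleton l a ih =>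
    have hla : ∀ z ∈ l, z ≤ a := fun z hz => (List.pairwise_append.mp hl).2.2 z hz a (by simp)
    by_cases haj : a ≤ j
    · refine ⟨l ++ [a] ++ [j], List.pairwise_append.mpr ⟨hl, by simp, ?_⟩, by simp [mul_assoc],
        rfl, fun b hjb hb y hy => ?_⟩
      · simp only [List.mem_append, List.mem_singleton, forall_eq]
        rintro z (hz | rfl)
        exacts [(hla z hz).trans haj, haj]
      · rw [List.mem_append, List.mem_singleton] at hy
        rcases hy with hy | rfl
        exacts [(hb y hy).trans b.le_succ, hjb.trans b.le_succ]
    · obtain ⟨l', hl', e, hN, hb'⟩ := ih (List.pairwise_append.mp hl).1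
      refine ⟨l' ++ [a + 1], List.pairwise_append.mpr ⟨hl', by simp, ?_⟩, ?_, ?_,
        fun b hjb hb y hy => ?_⟩
      · simpa using hb' a (by omega) hla
      · simp [e, mul_assoc, xg_mul_xg_of_lt (show j < a by omega)]
      · simp only [Nval_append_singleton, hN]; omega
      · rw [List.mem_append, List.mem_singleton] at hy
        rcases hy with hy | rfl
        · exact hb' b hjb (fun z hz => hb z (by simp [hz])) y hy
        · simpa using hb a (by simp)

theorem exists_pairwise_evalX_eq (U : List ℕ) :
    ∃ U' : List ℕ, U'.Pairwise (· ≤ ·) ∧ evalX U' = evalX U ∧ Nval U' = Nval U := by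
  induction U using List.reverseRecOn with
  | nil => exact ⟨[], by simp, rfl, rfl⟩
  | append_singleton U j ih =>
    obtain ⟨U', hU', e, hN⟩ := ih
    obtain ⟨l', hl', e', hN', -⟩ := exists_pairwise_evalX_eq_mul_xg hU' j
    refine ⟨l', hl', by simp [e', e], ?_⟩
    rw [hN', Nval_append_singleton, Nval_append_singleton, hN]

theorem exists_evalW_eq_of_mem_Hn {n : ℕ} (hn : 2 ≤ n) {h : GBV} (hh : h ∈ Hn n) :
    ∃ w : List (BVGen × Bool), (∀ p ∈ w, p.1 ∈ BnGen n) ∧ evalW w = h := by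
  have hgen : ∀ g ∈ ({g | ∃ i, 1 ≤ i ∧ i + 2 ≤ n ∧ g = sg i} ∪ {tg (n - 1)} : Set GBV),
      ∃ a ∈ BnGen n, PresentedGroup.of a = g := by
    rintro g (⟨i, hi, hin, rfl⟩ | rfl)
    · exact ⟨BVGen.s (i - 1), Or.inl ⟨i, hi, hin, rfl⟩, rfl⟩
    · exact ⟨BVGen.t (n - 2), Or.inr ⟨hn, rfl⟩, by rw [tg, show n - 1 - 1 = n - 2 by omega]⟩
  induction hh using Subgroup.closure_induction'' with
  | mem g hg =>
    obtain ⟨a, ha, rfl⟩ := hgen g hg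
    exact ⟨[(a, true)], by simpa using ha, by simp [evalW]⟩
  | inv_mem g hg =>
    obtain ⟨a, ha, rfl⟩ := hgen g hg
    exact ⟨[(a, false)], by simpa using ha, by simp [evalW]⟩
  | one => exact ⟨[], by simp, rfl⟩
  | mul a b _ _ ha hb =>
    obtain ⟨wa, hwa, rfl⟩ := ha
    obtain ⟨wb, hwb, rfl⟩ := hb
    exact ⟨wa ++ wb, fun p hp => (List.mem_append.mp hp).elim (hwa p) (hwb p), by simp [evalW]⟩

theorem exists_block_eval_eq {n : ℕ} {p : GBV} {V : List ℕ} (hn : 2 ≤ n)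
    (hp : p ∈ halfBlocks n) (hV : Nval V + 1 ≤ n) : ∃ b : Block, b.eval = p * (evalX V)⁻¹ := by
  obtain ⟨U, hU, h, hh, rfl⟩ := hp
  obtain ⟨U', hU', eU, NU⟩ := exists_pairwise_evalX_eq U
  obtain ⟨V', hV', eV, NV⟩ := exists_pairwise_evalX_eq V
  obtain ⟨w, hw, rfl⟩ := exists_evalW_eq_of_mem_Hn hn hh
  refine ⟨⟨U', w, V', n, List.isChain_iff_pairwise.mpr hU', List.isChain_iff_pairwise.mpr hV',
    hw, by omega⟩, ?_⟩
  simp [Block.eval, eU, eV]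

end GBV

/-- Every element of `BV` is represented by a block. -/
theorem bv_block_surjective (g : GBV) : ∃ b : GBV.Block, b.eval = g := by
  obtain ⟨n, hn, p, hp, V, rfl⟩ := GBV.mem_blockForms g
  exact GBV.exists_block_eval_eq (hn.trans (le_max_left _ _))
    (GBV.halfBlocks_mono hn (le_max_left n (GBV.Nval V + 1)) hp) (le_max_right _ _)
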